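/- arXiv:q-alg/9507030 — 3 statements merged into one kernel-verified Lean document; each statement's English description precedes it below -/
import Mathlib

section
/- Let A be an associative unital algebra over ℂ, C a two-sided ideal, and Q = A/C. If every derivation of Q is inner (i.e. Der(Q) = Int(Q)), then the Lie algebra homomorphism π : G_C → Der(Q), determined by π(X)(p(a)) = p(X(a)), is surjective; that is, Q is a submanifold algebra of A. -/
/-- A ℂ-linear map `X : A → A` is a derivation if it satisfies the Leibniz rule. -/
def IsDerivation {A : Type*} [Ring A] [Algebra ℂ A] (X : A →ₗ[ℂ] A) : Prop :=
  ∀ a b : A, X (a * b) = X a * b + a * X b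

/-- `G_C`: derivations of `A` preserving the two-sided ideal `C`. -/
def MemGC {A : Type*} [Ring A] [Algebra ℂ A] (C : TwoSidedIdeal A) (X : A →ₗ[ℂ] A) : Prop :=
  IsDerivation X ∧ ∀ c ∈ C, X c ∈ C

/-- The inner derivation `ad(a) : b ↦ ab - ba`. -/
def innerDer {A : Type*} [Ring A] [Algebra ℂ A] (a : A) : A →ₗ[ℂ] A :=
  LinearMap.mulLeft ℂ a - LinearMap.mulRight ℂ a

theorem stmt_3 {A Q : Type*} [Ring A] [Algebra ℂ A] [Ring Q] [Algebra ℂ Q]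
    (C : TwoSidedIdeal A)
    -- `Q = A/C` with quotient map `p`
    (p : A →ₐ[ℂ] Q) (hp : Function.Surjective p) (hker : ∀ a : A, p a = 0 ↔ a ∈ C)
    -- every derivation of Q is inner
    (hinner : ∀ D : Q →ₗ[ℂ] Q, IsDerivation D → ∃ q : Q, D = innerDer q) :
    -- π : G_C → Der(Q) is surjective, i.e. Q is a submanifold algebra of A
    ∀ D : Q →ₗ[ℂ] Q, IsDerivation D →
      ∃ X : A →ₗ[ℂ] A, MemGC C X ∧ ∀ a : A, p (X a) = D (p a) := by
  intro D hD
  obtain ⟨q, rfl⟩ := hinner D hD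
  obtain ⟨a, rfl⟩ := hp q
  refine ⟨innerDer a, ⟨?_, ?_⟩, ?_⟩
  · intro x y
    simp [innerDer, mul_sub, sub_mul, mul_assoc]
  · intro c hc
    simp only [innerDer, LinearMap.sub_apply, LinearMap.mulLeft_apply,
      LinearMap.mulRight_apply]
    exact C.sub_mem (C.mul_mem_left _ _ hc) (C.mul_mem_right _ _ hc)
  · intro b
    simp [innerDer]
end

section
/- Let A be an associative unital algebra over ℂ, C a two-sided ideal, Q = A/C, and suppose π : G_C → Der(Q) is surjective. Assume moreover that for every a ∈ A with [a, x] ∈ C for all x ∈ A there exists c ∈ C with ad(a) = ad(c) (i.e. ad(C) = {ad(a) : a ∈ A, [a, A] ⊆ C}). Then the sequence of Lie algebras 0 → G_A / ad(C) → G_C / Int(A) → Der(Q) / Int(Q) → 0 is exact: the map induced by the inclusion G_A ⊆ G_C is injective, its image equals the kernel of the map induced by π, and the map induced by π is surjective. -/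
/-- `G_A`: derivations of `A` with values in the two-sided ideal `C`. -/
def MemGA {A : Type*} [Ring A] [Algebra ℂ A] (C : TwoSidedIdeal A) (X : A →ₗ[ℂ] A) : Prop :=
  IsDerivation X ∧ ∀ a : A, X a ∈ C

lemma innerDer_apply {A : Type*} [Ring A] [Algebra ℂ A] (a b : A) :
    innerDer a b = a * b - b * a := rfl

lemma isDerivation_innerDer {A : Type*} [Ring A] [Algebra ℂ A] (a : A) :
    IsDerivation (innerDer a) := by
  intro x y
  simp only [innerDer_apply]
  noncomm_ring

theorem stmt_5 {A Q : Type*} [Ring A] [Algebra ℂ A] [Ring Q] [Algebra ℂ Q]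
    (C : TwoSidedIdeal A)
    -- `Q = A/C` with quotient map `p`
    (p : A →ₐ[ℂ] Q) (hp : Function.Surjective p) (hker : ∀ a : A, p a = 0 ↔ a ∈ C)
    -- π : G_C → Der(Q) is surjective: Q is a submanifold algebra
    (hsurj : ∀ D : Q →ₗ[ℂ] Q, IsDerivation D →
      ∃ X : A →ₗ[ℂ] A, MemGC C X ∧ ∀ a : A, p (X a) = D (p a))
    -- ad(C) = { ad(a) : a ∈ A and [a, A] ⊆ C }
    (hadC : ∀ a : A, (∀ x : A, a * x - x * a ∈ C) → ∃ c ∈ C, innerDer a = innerDer c) :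
    -- exactness of 0 → G_A/ad(C) → G_C/Int(A) → Der(Q)/Int(Q) → 0 :
    -- (1) injectivity of the map induced by the inclusion G_A ⊆ G_C
    (∀ X : A →ₗ[ℂ] A, MemGA C X → (∃ a : A, X = innerDer a) →
      ∃ c ∈ C, X = innerDer c) ∧
    -- (2) exactness at the middle term: the class of X ∈ G_C is killed iff it comes from G_A
    (∀ X : A →ₗ[ℂ] A, MemGC C X →
      ((∃ q : Q, ∀ a : A, p (X a) = innerDer q (p a)) ↔
        (∃ Y : A →ₗ[ℂ] A, MemGA C Y ∧ ∃ a₀ : A, X - Y = innerDer a₀))) ∧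
    -- (3) surjectivity of the map induced by π
    (∀ D : Q →ₗ[ℂ] Q, IsDerivation D →
      ∃ X : A →ₗ[ℂ] A, MemGC C X ∧ ∃ q : Q,
        ∀ a : A, p (X a) = D (p a) + innerDer q (p a)) := by
  refine ⟨?_, ?_, ?_⟩
  · rintro X ⟨hXd, hXC⟩ ⟨a, rfl⟩
    exact hadC a (fun x => hXC x)
  · rintro X ⟨hXd, hXC⟩
    constructor
    · rintro ⟨q, hq⟩
      obtain ⟨b, rfl⟩ := hp q
      refine ⟨X - innerDer b, ⟨?_, ?_⟩, b, by abel⟩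
      · intro x y
        simp only [LinearMap.sub_apply, innerDer_apply, hXd x y]
        noncomm_ring
      · intro a
        rw [← hker]
        have := hq a
        simp only [LinearMap.sub_apply, innerDer_apply, map_sub, map_mul] at this ⊢
        rw [this, sub_self]
    · rintro ⟨Y, ⟨hYd, hYC⟩, a₀, hXY⟩
      refine ⟨p a₀, fun a => ?_⟩
      have hX : X a = Y a + innerDer a₀ a := by
        have := congrArg (fun f => f a) hXY
        simp only [LinearMap.sub_apply] at this
        rw [← this]; abel
      have hY0 : p (Y a) = 0 := (hker _).2 (hYC a)
      rw [hX, map_add, hY0, zero_add, innerDer_apply, innerDer_apply, map_sub, map_mul,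
        map_mul]
  · intro D hD
    obtain ⟨X, hX, hq⟩ := hsurj D hD
    exact ⟨X, hX, 0, fun a => by simp [innerDer_apply, hq a]⟩
end

section
/- Let n ≥ 2, let A be the free associative unital ℂ-algebra on generators x¹, …, xⁿ, let C be the two-sided ideal of A generated by x¹, and let Q = A/C, which is isomorphic to the free associative unital ℂ-algebra on x², …, xⁿ. Then the canonical Lie algebra homomorphism π : G_C → Der(Q) (where G_C = {X ∈ Der(A) : X(C) ⊆ C} and π(X)(p(a)) = p(X(a)) for the quotient map p : A → Q) is surjective; that is, every derivation of Q lifts to a derivation of A preserving C, so Q is a submanifold algebra of A. -/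
/-!
A derivation of the free algebra `A` may take arbitrary values `f i` on the generators: the algebra
map `A → A ⊕ ε A` (trivial square-zero extension) sending `xᵢ` to `xᵢ + ε f i` exists by freeness,
and its `ε`-component is the derivation. Given a derivation `D` of a quotient `p : A → Q`, choosing
`f i` as a preimage of `D (p xᵢ)` gives a derivation `X` with `p ∘ X = D ∘ p` on generators, hence
everywhere; in particular `X` preserves `ker p`.
-/

theorem IsDerivation.map_one_eq_zero {A : Type*} [Ring A] [Algebra ℂ A] {X : A →ₗ[ℂ] A}
    (hX : IsDerivation X) : X 1 = 0 := by
  simpa using hX 1 1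

namespace FreeAlgebra

variable {R S : Type*} [CommSemiring R]

noncomputable def infinitesimalLift (f : S → FreeAlgebra R S) :
    FreeAlgebra R S →ₐ[R] TrivSqZeroExt (FreeAlgebra R S) (FreeAlgebra R S) :=
  lift R fun i => .inl (ι R i) + .inr (f i)

theorem fst_infinitesimalLift (f : S → FreeAlgebra R S) (a : FreeAlgebra R S) :
    (infinitesimalLift f a).fst = a := by
  have : (TrivSqZeroExt.fstHom R _ _).comp (infinitesimalLift f) = AlgHom.id R _ :=
    hom_ext <| funext fun i => by simp [infinitesimalLift]
  exact AlgHom.congr_fun this a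

noncomputable def liftDerivation (f : S → FreeAlgebra R S) :
    FreeAlgebra R S →ₗ[R] FreeAlgebra R S :=
  ((TrivSqZeroExt.sndHom _ _).restrictScalars R).comp (infinitesimalLift f).toLinearMap

theorem liftDerivation_apply (f : S → FreeAlgebra R S) (a : FreeAlgebra R S) :
    liftDerivation f a = (infinitesimalLift f a).snd :=
  rfl

@[simp]
theorem liftDerivation_ι (f : S → FreeAlgebra R S) (i : S) : liftDerivation f (ι R i) = f i := by
  simp [liftDerivation_apply, infinitesimalLift]

theorem liftDerivation_mul (f : S → FreeAlgebra R S) (a b : FreeAlgebra R S) :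
    liftDerivation f (a * b) = liftDerivation f a * b + a * liftDerivation f b := by
  simp only [liftDerivation_apply, map_mul, TrivSqZeroExt.snd_mul, fst_infinitesimalLift,
    smul_eq_mul, MulOpposite.smul_eq_mul_unop, MulOpposite.unop_op]
  exact add_comm _ _

theorem isDerivation_liftDerivation (f : S → FreeAlgebra ℂ S) :
    IsDerivation (liftDerivation f) :=
  liftDerivation_mul f

theorem map_derivation_eq_of_map_ι {B : Type*} [Ring B] [Algebra ℂ B]
    (p : FreeAlgebra ℂ S →ₐ[ℂ] B) {X : FreeAlgebra ℂ S →ₗ[ℂ] FreeAlgebra ℂ S} {D : B →ₗ[ℂ] B}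
    (hX : IsDerivation X) (hD : IsDerivation D) (h : ∀ i, p (X (ι ℂ i)) = D (p (ι ℂ i)))
    (a : FreeAlgebra ℂ S) : p (X a) = D (p a) := by
  induction a using FreeAlgebra.induction with
  | grade0 c =>
    simp only [Algebra.algebraMap_eq_smul_one, map_smul, hX.map_one_eq_zero, map_one,
      hD.map_one_eq_zero, smul_zero, map_zero]
  | grade1 i => exact h i
  | mul a b ha hb => rw [hX a b, map_add, map_mul, map_mul, map_mul, hD, ha, hb]
  | add a b ha hb => rw [map_add, map_add, map_add, map_add, ha, hb]

end FreeAlgebra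

theorem stmt_16 (n : ℕ) (Q : Type*) [Ring Q] [Algebra ℂ Q]
    -- C is the two-sided ideal of the free algebra A = ℂ⟨x¹, …, xⁿ⟩ generated by x¹
    (C : TwoSidedIdeal (FreeAlgebra ℂ (Fin n)))
    -- `Q = A/C` with quotient map `p`
    (p : FreeAlgebra ℂ (Fin n) →ₐ[ℂ] Q) (hp : Function.Surjective p)
    (hker : ∀ a : FreeAlgebra ℂ (Fin n), p a = 0 ↔ a ∈ C) :
    -- π : G_C → Der(Q) is surjective: every derivation of Q lifts to a derivation
    -- of A preserving C, so Q is a submanifold algebra of A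
    ∀ D : Q →ₗ[ℂ] Q, IsDerivation D →
      ∃ X : FreeAlgebra ℂ (Fin n) →ₗ[ℂ] FreeAlgebra ℂ (Fin n),
        IsDerivation X ∧ (∀ c ∈ C, X c ∈ C) ∧
        ∀ a : FreeAlgebra ℂ (Fin n), p (X a) = D (p a) := by
  intro D hD
  choose f hf using fun i => hp (D (p (FreeAlgebra.ι ℂ i)))
  have hX := FreeAlgebra.isDerivation_liftDerivation f
  have hcomm := FreeAlgebra.map_derivation_eq_of_map_ι p hX hD fun i => by
    rw [FreeAlgebra.liftDerivation_ι, hf]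
  refine ⟨FreeAlgebra.liftDerivation f, hX, fun c hc => ?_, hcomm⟩
  rw [← hker] at hc ⊢
  rw [hcomm, hc, map_zero]
end
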